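/- arXiv:2307.16502 — 5 statements merged into one kernel-verified Lean document; each statement's English description precedes it below -/
import Mathlib

section
/- Let or(·) be any map assigning to each undirected edge a of G one of its two directed orientations. Then for any two undirected edges a, b of G, the sum B_{or(a),or(b)} + B_{or(a),or(b)⁻¹} + B_{or(a)⁻¹,or(b)} + B_{or(a)⁻¹,or(b)⁻¹} equals 1 if a ≠ b and a and b share a common endpoint, and equals 0 otherwise. In particular, arranging these sums into an m×m matrix yields the adjacency matrix of the line-graph of G. -/
open Matrix

/-- The non-backtracking matrix of a finite simple graph, indexed by darts
(directed edges): `B e f = 1` iff the end of `f` is the start of `e` and the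
start of `f` is not the end of `e`. -/
def nonBacktracking {V : Type*} [DecidableEq V] (G : SimpleGraph V) :
    Matrix G.Dart G.Dart ℝ := fun e f =>
  if f.snd = e.fst ∧ f.fst ≠ e.snd then 1 else 0

/- A non-backtracking step between the two edges passes through a common vertex, and distinct
edges of a simple graph share at most one, so at most one of the four terms is nonzero. -/
open scoped Classical in
theorem nonBacktracking_add_symm_eq {V : Type*} [DecidableEq V] {G : SimpleGraph V}
    (d e : G.Dart) :
    nonBacktracking G d e + nonBacktracking G d e.symm +
        nonBacktracking G d.symm e + nonBacktracking G d.symm e.symm =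
      if d.edge ≠ e.edge ∧ ∃ v, v ∈ d.edge ∧ v ∈ e.edge then 1 else 0 := by
  obtain ⟨⟨u, v⟩, huv⟩ := d
  obtain ⟨⟨p, q⟩, hpq⟩ := e
  have huv' : u ≠ v := G.ne_of_adj huv
  have hpq' : p ≠ q := G.ne_of_adj hpq
  simp only [nonBacktracking, SimpleGraph.Dart.symm, SimpleGraph.Dart.edge_mk, Prod.swap,
    Sym2.mem_iff]
  by_cases hpu : p = u <;> by_cases hpv : p = v <;> by_cases hqu : q = u <;>
    by_cases hqv : q = v <;> simp_all [eq_comm]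

open scoped Classical in
theorem nonBacktracking_sum_eq_lineGraph_adjMatrix_general {V : Type*} [Fintype V] [DecidableEq V]
    (G : SimpleGraph V)
    (or : G.edgeSet → G.Dart) (hor : ∀ a : G.edgeSet, (or a).edge = (a : Sym2 V)) :
    (∀ a b : G.edgeSet,
      nonBacktracking G (or a) (or b) + nonBacktracking G (or a) (or b).symm +
        nonBacktracking G (or a).symm (or b) + nonBacktracking G (or a).symm (or b).symm =
      if a ≠ b ∧ ∃ v, v ∈ (a : Sym2 V) ∧ v ∈ (b : Sym2 V) then 1 else 0) ∧
    (fun a b : G.edgeSet =>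
      nonBacktracking G (or a) (or b) + nonBacktracking G (or a) (or b).symm +
        nonBacktracking G (or a).symm (or b) + nonBacktracking G (or a).symm (or b).symm) =
      (G.lineGraph).adjMatrix ℝ := by
  have entry : ∀ a b : G.edgeSet,
      nonBacktracking G (or a) (or b) + nonBacktracking G (or a) (or b).symm +
        nonBacktracking G (or a).symm (or b) + nonBacktracking G (or a).symm (or b).symm =
      if a ≠ b ∧ ∃ v, v ∈ (a : Sym2 V) ∧ v ∈ (b : Sym2 V) then 1 else 0 := by
    intro a b
    rw [nonBacktracking_add_symm_eq]
    simp only [hor, ne_eq, ← Subtype.ext_iff]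
  refine ⟨entry, ?_⟩
  ext a b
  rw [entry, SimpleGraph.adjMatrix_apply, SimpleGraph.lineGraph_adj_iff_exists]
  congr

open scoped Classical in
/-- For any orientation map `or` assigning to each undirected edge one of its two darts,
the sum of the four entries of the non-backtracking matrix `B` over the orientations of
two undirected edges `a, b` equals `1` if `a ≠ b` and `a, b` share an endpoint, and `0`
otherwise; i.e., these sums form the adjacency matrix of the line-graph of `G`. -/
theorem nonBacktracking_sum_eq_lineGraph_adjMatrix {V : Type*} [Fintype V] [DecidableEq V]
    (G : SimpleGraph V) [DecidableRel G.Adj]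
    (or : G.edgeSet → G.Dart) (hor : ∀ a : G.edgeSet, (or a).edge = (a : Sym2 V)) :
    (∀ a b : G.edgeSet,
      nonBacktracking G (or a) (or b) + nonBacktracking G (or a) (or b).symm +
        nonBacktracking G (or a).symm (or b) + nonBacktracking G (or a).symm (or b).symm =
      if a ≠ b ∧ ∃ v, v ∈ (a : Sym2 V) ∧ v ∈ (b : Sym2 V) then 1 else 0) ∧
    (fun a b : G.edgeSet =>
      nonBacktracking G (or a) (or b) + nonBacktracking G (or a) (or b).symm +
        nonBacktracking G (or a).symm (or b) + nonBacktracking G (or a).symm (or b).symm) =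
      (G.lineGraph).adjMatrix ℝ :=
  nonBacktracking_sum_eq_lineGraph_adjMatrix_general G or hor
end

section
/- For every real vector x indexed by the directed edges of a finite simple graph G, the non-backtracking matrix B satisfies Startᵀ (B x) = (D − I) Endᵀ x and Endᵀ (B x) = A (Endᵀ x) − Startᵀ x, where A is the adjacency matrix, D the diagonal degree matrix, and I the identity matrix of G. Equivalently, writing x^out = Startᵀ x and x^in = Endᵀ x, one has (Bx)^out_i = (d_i − 1) x^in_i and (Bx)^in_i = Σ_{j ∼ i} x^in_j − x^out_i for every node i. -/
open Matrix

/-- The end matrix of a graph: `End e i = 1` iff node `i` is the end of dart `e`. -/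
def endMatrix {V : Type*} [DecidableEq V] (G : SimpleGraph V) :
    Matrix G.Dart V ℝ := fun e i => if e.snd = i then 1 else 0

/-- The start matrix of a graph: `Start e i = 1` iff node `i` is the start of dart `e`. -/
def startMatrix {V : Type*} [DecidableEq V] (G : SimpleGraph V) :
    Matrix G.Dart V ℝ := fun e i => if e.fst = i then 1 else 0

/-!
Writing `J` for the reversal permutation `e ↦ e.symm` of the darts, the non-backtracking matrix
splits as `B = Start Endᵀ − J`. The Gram-type products of the incidence matrices are
`Startᵀ Start = D` and `Endᵀ Start = A`, while `J` swaps the roles of start and end: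
`Startᵀ J = Endᵀ` and `Endᵀ J = Startᵀ`. Hence `Startᵀ B = D Endᵀ − Endᵀ` and
`Endᵀ B = A Endᵀ − Startᵀ`.
-/

namespace SimpleGraph

variable {V : Type*} [DecidableEq V] (G : SimpleGraph V)

def dartReversalMatrix : Matrix G.Dart G.Dart ℝ :=
  (Dart.symm_involutive.toPerm _).permMatrix ℝ

lemma startMatrix_transpose_mul_dartReversalMatrix [Fintype G.Dart] :
    (startMatrix G)ᵀ * G.dartReversalMatrix = (endMatrix G)ᵀ := by
  ext i e
  simp [dartReversalMatrix, Equiv.Perm.permMatrix, PEquiv.mul_toMatrix_toPEquiv, startMatrix,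
    endMatrix]

lemma endMatrix_transpose_mul_dartReversalMatrix [Fintype G.Dart] :
    (endMatrix G)ᵀ * G.dartReversalMatrix = (startMatrix G)ᵀ := by
  ext i e
  simp [dartReversalMatrix, Equiv.Perm.permMatrix, PEquiv.mul_toMatrix_toPEquiv, startMatrix,
    endMatrix]

/-- `f` may follow `e` iff it ends where `e` starts, except for `f = e.symm`. -/
lemma nonBacktracking_eq_startMatrix_mul_sub [Fintype V] :
    nonBacktracking G = startMatrix G * (endMatrix G)ᵀ - G.dartReversalMatrix := by
  ext e f
  have h_symm : e.symm = f ↔ f.snd = e.fst ∧ f.fst = e.snd := by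
    rw [Dart.ext_iff, Prod.ext_iff]
    exact ⟨fun h => ⟨h.2.symm, h.1.symm⟩, fun h => ⟨h.2.symm, h.1.symm⟩⟩
  simp only [nonBacktracking, Matrix.sub_apply, mul_apply, startMatrix, endMatrix,
    transpose_apply, ite_mul, one_mul, zero_mul, Finset.sum_ite_eq, Finset.mem_univ, if_true,
    dartReversalMatrix, Equiv.Perm.permMatrix, PEquiv.toMatrix_apply, Equiv.toPEquiv_apply,
    Option.mem_def, Option.some_inj, Function.Involutive.coe_toPerm, h_symm]
  grind

variable [Fintype V] [DecidableRel G.Adj]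

lemma startMatrix_transpose_mul_self :
    (startMatrix G)ᵀ * startMatrix G = diagonal (fun i => (G.degree i : ℝ)) := by
  ext i j
  simp only [mul_apply, transpose_apply, startMatrix, ← ite_and, ite_mul, one_mul, zero_mul,
    diagonal_apply]
  rcases eq_or_ne i j with rfl | hij
  · simp only [and_self, if_true, Finset.sum_boole, dart_fst_fiber_card_eq_degree]
  · refine (Finset.sum_eq_zero fun e _ => if_neg ?_).trans (if_neg hij).symm
    rintro ⟨rfl, rfl⟩
    exact hij rfl

lemma endMatrix_transpose_mul_startMatrix :
    (endMatrix G)ᵀ * startMatrix G = G.adjMatrix ℝ := by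
  ext i j
  simp only [mul_apply, transpose_apply, startMatrix, endMatrix, ← ite_and, ite_mul, one_mul,
    zero_mul, adjMatrix_apply]
  by_cases hij : G.Adj i j
  · rw [Fintype.sum_eq_single (⟨(j, i), hij.symm⟩ : G.Dart)]
    · simp [hij]
    · refine fun e he => if_neg ?_
      rintro ⟨h_snd, h_fst⟩
      exact he (Dart.ext _ _ (Prod.ext h_fst h_snd))
  · simp only [hij, if_false]
    refine Finset.sum_eq_zero fun e _ => if_neg ?_
    rintro ⟨rfl, rfl⟩
    exact hij e.adj.symm

lemma startMatrix_transpose_mul_nonBacktracking :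
    (startMatrix G)ᵀ * nonBacktracking G =
      (diagonal (fun i => (G.degree i : ℝ)) - 1) * (endMatrix G)ᵀ := by
  rw [nonBacktracking_eq_startMatrix_mul_sub, Matrix.mul_sub, ← Matrix.mul_assoc,
    startMatrix_transpose_mul_self, startMatrix_transpose_mul_dartReversalMatrix, Matrix.sub_mul,
    Matrix.one_mul]

lemma endMatrix_transpose_mul_nonBacktracking :
    (endMatrix G)ᵀ * nonBacktracking G = G.adjMatrix ℝ * (endMatrix G)ᵀ - (startMatrix G)ᵀ := by
  rw [nonBacktracking_eq_startMatrix_mul_sub, Matrix.mul_sub, ← Matrix.mul_assoc,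
    endMatrix_transpose_mul_startMatrix, endMatrix_transpose_mul_dartReversalMatrix]

end SimpleGraph

/-- `Startᵀ (B x) = (D − I) Endᵀ x` and `Endᵀ (B x) = A (Endᵀ x) − Startᵀ x`;
equivalently, writing `x^out = Startᵀ x` and `x^in = Endᵀ x`,
`(Bx)^out_i = (d_i − 1) x^in_i` and `(Bx)^in_i = Σ_{j ∼ i} x^in_j − x^out_i`. -/
theorem nonBacktracking_inout_relations {V : Type*} [Fintype V] [DecidableEq V]
    (G : SimpleGraph V) [DecidableRel G.Adj] (x : G.Dart → ℝ) :
    ((startMatrix G)ᵀ.mulVec ((nonBacktracking G).mulVec x) =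
        (Matrix.diagonal (fun i => (G.degree i : ℝ)) - 1).mulVec
          ((endMatrix G)ᵀ.mulVec x)) ∧
    ((endMatrix G)ᵀ.mulVec ((nonBacktracking G).mulVec x) =
        (G.adjMatrix ℝ).mulVec ((endMatrix G)ᵀ.mulVec x) -
          (startMatrix G)ᵀ.mulVec x) ∧
    (∀ i : V, (startMatrix G)ᵀ.mulVec ((nonBacktracking G).mulVec x) i =
        ((G.degree i : ℝ) - 1) * (endMatrix G)ᵀ.mulVec x i) ∧
    (∀ i : V, (endMatrix G)ᵀ.mulVec ((nonBacktracking G).mulVec x) i =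
        (∑ j ∈ G.neighborFinset i, (endMatrix G)ᵀ.mulVec x j) -
          (startMatrix G)ᵀ.mulVec x i) := by
  have h_out : (startMatrix G)ᵀ *ᵥ (nonBacktracking G *ᵥ x) =
      (diagonal (fun i => (G.degree i : ℝ)) - 1) *ᵥ ((endMatrix G)ᵀ *ᵥ x) := by
    rw [mulVec_mulVec, mulVec_mulVec, G.startMatrix_transpose_mul_nonBacktracking]
  have h_in : (endMatrix G)ᵀ *ᵥ (nonBacktracking G *ᵥ x) =
      G.adjMatrix ℝ *ᵥ ((endMatrix G)ᵀ *ᵥ x) - (startMatrix G)ᵀ *ᵥ x := by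
    rw [mulVec_mulVec, mulVec_mulVec, G.endMatrix_transpose_mul_nonBacktracking, sub_mulVec]
  refine ⟨h_out, h_in, fun i => ?_, fun i => ?_⟩
  · rw [h_out, sub_mulVec, one_mulVec, Pi.sub_apply, mulVec_diagonal, sub_mul, one_mul]
  · rw [h_in, Pi.sub_apply, SimpleGraph.adjMatrix_mulVec_apply]
end

section
/- If x is a real right eigenvector of the non-backtracking matrix B of a finite simple graph on n nodes with real eigenvalue μ (B x = μ x), then the 2n-dimensional vector (x^out, x^in), where x^out = Startᵀ x and x^in = Endᵀ x, is a right eigenvector of the 2n×2n matrix K = [[0, D − I], [−I, A]] with the same eigenvalue μ; moreover, if μ ≠ 0, then x^out = (1/μ)(D − I) x^in. -/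
open Matrix

/-- The `2n × 2n` matrix `K = [[0, D − I], [−I, A]]`. -/
def Kmatrix {V : Type*} [Fintype V] [DecidableEq V] (G : SimpleGraph V)
    [DecidableRel G.Adj] : Matrix (V ⊕ V) (V ⊕ V) ℝ :=
  Matrix.fromBlocks 0 (Matrix.diagonal (fun i => (G.degree i : ℝ)) - 1) (-1) (G.adjMatrix ℝ)

/-!
Writing `J` for the permutation matrix of dart reversal, `B = Start Endᵀ - J`: a dart `f`
feeds into `e` when it ends where `e` starts, unless it is the reverse of `e`. Multiplying
on the left by `Startᵀ` and `Endᵀ`, and using `Startᵀ Start = D`, `Endᵀ Start = A`,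
`Startᵀ J = Endᵀ` and `Endᵀ J = Startᵀ`, gives `Startᵀ B = (D - I) Endᵀ` and
`Endᵀ B = A Endᵀ - Startᵀ`, i.e. `K P = P B` for `P = [Startᵀ; Endᵀ]`. Hence `P` maps
eigenvectors of `B` to eigenvectors of `K`, and the first block row gives
`μ x^out = (D - I) x^in`.
-/

section

variable {V : Type*} [DecidableEq V] (G : SimpleGraph V)

def dartReversalMatrix : Matrix G.Dart G.Dart ℝ := fun e f => if f = e.symm then 1 else 0

theorem nonBacktracking_eq_startMatrix_mul_sub_dartReversalMatrix [Fintype V] :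
    nonBacktracking G = startMatrix G * (endMatrix G)ᵀ - dartReversalMatrix G := by
  have hsymm : ∀ e f : G.Dart, f = e.symm ↔ f.snd = e.fst ∧ f.fst = e.snd := fun e f => by
    rw [SimpleGraph.Dart.ext_iff, Prod.ext_iff]
    exact and_comm
  ext e f
  by_cases h₁ : f.snd = e.fst <;> by_cases h₂ : f.fst = e.snd <;>
    simp [nonBacktracking, startMatrix, endMatrix, dartReversalMatrix, mul_apply, hsymm,
      h₁, h₂, eq_comm]

variable [Fintype V] [DecidableRel G.Adj]

theorem mul_dartReversalMatrix {m : Type*} (M : Matrix m G.Dart ℝ) :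
    M * dartReversalMatrix G = M.submatrix id SimpleGraph.Dart.symm := by
  ext i f
  have hsymm : ∀ e : G.Dart, f = e.symm ↔ e = f.symm := fun e => by
    rw [eq_comm, SimpleGraph.Dart.symm_involutive.eq_iff]
  simp [dartReversalMatrix, mul_apply, hsymm]

theorem startMatrix_transpose_mul_startMatrix :
    (startMatrix G)ᵀ * startMatrix G = diagonal (fun i => (G.degree i : ℝ)) := by
  ext i j
  simp only [startMatrix, mul_apply, transpose_apply, ite_mul, one_mul, zero_mul,
    diagonal_apply, ← ite_and]
  rcases eq_or_ne i j with rfl | hij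
  · simp only [and_self, Finset.sum_boole, G.dart_fst_fiber_card_eq_degree, if_true]
  · simp +contextual [hij]

theorem endMatrix_transpose_mul_startMatrix :
    (endMatrix G)ᵀ * startMatrix G = G.adjMatrix ℝ := by
  ext i j
  simp only [startMatrix, endMatrix, mul_apply, transpose_apply, ite_mul, one_mul, zero_mul,
    ← ite_and, SimpleGraph.adjMatrix_apply]
  by_cases h : G.Adj j i
  · have hdart : ∀ e : G.Dart, e.snd = i ∧ e.fst = j ↔ e = ⟨(j, i), h⟩ := fun e => by
      rw [SimpleGraph.Dart.ext_iff, Prod.ext_iff]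
      exact and_comm
    simp [hdart, h.symm]
  · rw [if_neg (fun h' => h h'.symm)]
    refine Finset.sum_eq_zero fun e _ => if_neg ?_
    rintro ⟨rfl, rfl⟩
    exact h e.adj

theorem startMatrix_transpose_mul_nonBacktracking :
    (startMatrix G)ᵀ * nonBacktracking G =
      (diagonal (fun i => (G.degree i : ℝ)) - 1) * (endMatrix G)ᵀ := by
  rw [nonBacktracking_eq_startMatrix_mul_sub_dartReversalMatrix, Matrix.mul_sub,
    ← Matrix.mul_assoc, startMatrix_transpose_mul_startMatrix, mul_dartReversalMatrix,
    Matrix.sub_mul, Matrix.one_mul]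
  rfl

theorem endMatrix_transpose_mul_nonBacktracking :
    (endMatrix G)ᵀ * nonBacktracking G =
      -(startMatrix G)ᵀ + G.adjMatrix ℝ * (endMatrix G)ᵀ := by
  rw [nonBacktracking_eq_startMatrix_mul_sub_dartReversalMatrix, Matrix.mul_sub,
    ← Matrix.mul_assoc, endMatrix_transpose_mul_startMatrix, mul_dartReversalMatrix,
    sub_eq_neg_add]
  rfl

theorem Kmatrix_mul_fromRows :
    Kmatrix G * fromRows (startMatrix G)ᵀ (endMatrix G)ᵀ =
      fromRows (startMatrix G)ᵀ (endMatrix G)ᵀ * nonBacktracking G := by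
  rw [Kmatrix, fromBlocks_mul_fromRows, fromRows_mul,
    startMatrix_transpose_mul_nonBacktracking, endMatrix_transpose_mul_nonBacktracking,
    Matrix.zero_mul, zero_add, Matrix.neg_mul, Matrix.one_mul]

end

/-- If `B x = μ x`, then the vector `(x^out, x^in)`, with `x^out = Startᵀ x`
and `x^in = Endᵀ x`, is a right eigenvector of `K = [[0, D − I], [−I, A]]`
with the same eigenvalue `μ`; moreover, if `μ ≠ 0`, then
`x^out = (1/μ)(D − I) x^in`. -/
theorem nonBacktracking_eigenvector_to_K {V : Type*} [Fintype V] [DecidableEq V]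
    (G : SimpleGraph V) [DecidableRel G.Adj] (x : G.Dart → ℝ) (μ : ℝ)
    (hx : (nonBacktracking G).mulVec x = μ • x) :
    ((Kmatrix G).mulVec
        (Sum.elim ((startMatrix G)ᵀ.mulVec x) ((endMatrix G)ᵀ.mulVec x)) =
      μ • Sum.elim ((startMatrix G)ᵀ.mulVec x) ((endMatrix G)ᵀ.mulVec x)) ∧
    (μ ≠ 0 → (startMatrix G)ᵀ.mulVec x =
        μ⁻¹ • (Matrix.diagonal (fun i => (G.degree i : ℝ)) - 1).mulVec
          ((endMatrix G)ᵀ.mulVec x)) := by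
  refine ⟨?_, fun hμ => ?_⟩
  · rw [← fromRows_mulVec, mulVec_mulVec, Kmatrix_mul_fromRows, ← mulVec_mulVec, hx,
      mulVec_smul]
  · rw [mulVec_mulVec, ← startMatrix_transpose_mul_nonBacktracking, ← mulVec_mulVec, hx,
      mulVec_smul, inv_smul_smul₀ hμ]
end

section
/- Let ũ ∈ ℝ^k, let u ∈ ℝ^n be its inflated version (u_i = ũ_{σ(i)} for every node i), and let ν be a real number. Then Ā u = ν u holds if and only if (R C) ũ = ν ũ, and this in turn holds if and only if (R^{1/2} C R^{1/2}) v = ν v where v = R^{1/2} ũ. -/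
open Matrix Finset

/-! Grouping the sum `(Ā u)_i = ∑_j C_{σ i, σ j} ũ_{σ j} / n` by clusters shows that `Ā u` is the
inflation of `C R ũ`, and a surjective `σ` makes inflation injective. Symmetry of `C` identifies
`C R ũ` with `ũ (R C)`, and `R^{1/2} C R^{1/2} (R^{1/2} ũ) = R^{1/2} (C R ũ)` with `R^{1/2}`
invertible because every cluster is nonempty. -/

section Inflation

variable {l m ι κ α : Type*} [Fintype ι] [DecidableEq κ]

theorem Matrix.submatrix_mulVec_comp [Fintype κ] [Semiring α] (A : Matrix l κ α) (f : m → l)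
    (σ : ι → κ) (v : κ → α) :
    A.submatrix f σ *ᵥ (v ∘ σ) = ((A * diagonal fun b => (#{j | σ j = b} : α)) *ᵥ v) ∘ f := by
  ext i
  simp only [mulVec, dotProduct, submatrix_apply, Function.comp_apply, mul_diagonal]
  rw [← sum_fiberwise univ σ fun j => A (f i) (σ j) * v (σ j)]
  refine sum_congr rfl fun b _ => ?_
  rw [sum_congr rfl fun j hj => by rw [(mem_filter.1 hj).2], sum_const, nsmul_eq_mul, ← mul_assoc,
    Nat.cast_comm]

theorem Function.Surjective.card_fiber_div_card_pos {K : Type*} [Semifield K] [LinearOrder K]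
    [IsStrictOrderedRing K] {σ : ι → κ} (hσ : Function.Surjective σ) (a : κ) :
    0 < (#{i | σ i = a} : K) / Fintype.card ι := by
  obtain ⟨i, rfl⟩ := hσ a
  have hfiber : 0 < #{j | σ j = σ i} := card_pos.2 ⟨i, mem_filter.2 ⟨mem_univ i, rfl⟩⟩
  have hle : #{j | σ j = σ i} ≤ Fintype.card ι := card_le_univ _
  exact div_pos (by exact_mod_cast hfiber) (by exact_mod_cast hfiber.trans_le hle)

end Inflation

theorem inflated_eigen_iff_deflated_general {n k : ℕ}
    (σ : Fin n → Fin k) (hσ : Function.Surjective σ)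
    (C : Matrix (Fin k) (Fin k) ℝ) (hC : C.IsSymm)
    (ut : Fin k → ℝ) (u : Fin n → ℝ) (hu : ∀ i, u i = ut (σ i)) (ν : ℝ) :
    letI Abar : Matrix (Fin n) (Fin n) ℝ := fun i j => C (σ i) (σ j) / n
    letI r : Fin k → ℝ := fun a => ((univ.filter fun i => σ i = a).card : ℝ) / n
    letI R : Matrix (Fin k) (Fin k) ℝ := Matrix.diagonal r
    letI Rhalf : Matrix (Fin k) (Fin k) ℝ := Matrix.diagonal fun a => Real.sqrt (r a)
    ((Abar.mulVec u = ν • u) ↔ (ut ᵥ* (R * C) = ν • ut)) ∧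
      ((ut ᵥ* (R * C) = ν • ut) ↔
        ((Rhalf * C * Rhalf).mulVec (Rhalf.mulVec ut) = ν • Rhalf.mulVec ut)) := by
  set Abar : Matrix (Fin n) (Fin n) ℝ := fun i j => C (σ i) (σ j) / n
  set r : Fin k → ℝ := fun a => (#{i | σ i = a} : ℝ) / n
  set R : Matrix (Fin k) (Fin k) ℝ := diagonal r
  set Rhalf : Matrix (Fin k) (Fin k) ℝ := diagonal fun a => √(r a)
  have hr : ∀ a, 0 < r a := by simpa using hσ.card_fiber_div_card_pos (K := ℝ)
  have hu : u = ut ∘ σ := funext hu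
  have hvecMul : ut ᵥ* (R * C) = (C * R) *ᵥ ut := by
    rw [← mulVec_transpose, transpose_mul, hC.eq, diagonal_transpose]
  have hAbar : Abar *ᵥ u = ((C * R) *ᵥ ut) ∘ σ := by
    have hCR : (C.map (· / (n : ℝ))) * diagonal (fun b => (#{j | σ j = b} : ℝ)) = C * R := by
      ext a b
      simp only [mul_diagonal, map_apply, R, r]
      ring
    rw [hu, ← hCR, ← submatrix_mulVec_comp]
    rfl
  have hRhalf : Rhalf * Rhalf = R := by
    rw [diagonal_mul_diagonal]
    exact congrArg diagonal (funext fun a => Real.mul_self_sqrt (hr a).le)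
  have hRhalf_unit : IsUnit Rhalf :=
    isUnit_diagonal.2 (Pi.isUnit_iff.2 fun a => (Real.sqrt_pos.2 (hr a)).ne'.isUnit)
  refine ⟨?_, ?_⟩
  · rw [hAbar, hvecMul, hu, ← Pi.smul_comp, hσ.right_cancellable]
  · have hconj : (Rhalf * C * Rhalf) *ᵥ (Rhalf *ᵥ ut) = Rhalf *ᵥ ((C * R) *ᵥ ut) := by
      rw [mulVec_mulVec, mulVec_mulVec, mul_assoc, mul_assoc, hRhalf]
    rw [hvecMul, hconj, ← mulVec_smul, (mulVec_injective_iff_isUnit.2 hRhalf_unit).eq_iff]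

/-- **Inflation–deflation of eigenvectors in the stochastic block model.**
Let `σ` be a surjective cluster assignment of `n` nodes into `k` clusters, `C` a
symmetric affinity matrix, `Ā` the inflated matrix with entries `C (σ i) (σ j) / n`,
`R` the diagonal matrix of relative cluster sizes and `u` the inflated version of
`ũ`. Then `Ā u = ν u` iff `ũ (R C) = ν ũ` (as an eigenvector relation for `R C`),
iff `(R^{1/2} C R^{1/2}) v = ν v` where `v = R^{1/2} ũ`. -/
theorem inflated_eigen_iff_deflated {n k : ℕ} (hn : 0 < n) (hk : 0 < k)
    (σ : Fin n → Fin k) (hσ : Function.Surjective σ)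
    (C : Matrix (Fin k) (Fin k) ℝ) (hC : C.IsSymm)
    (ut : Fin k → ℝ) (u : Fin n → ℝ) (hu : ∀ i, u i = ut (σ i)) (ν : ℝ) :
    letI Abar : Matrix (Fin n) (Fin n) ℝ := fun i j => C (σ i) (σ j) / n
    letI r : Fin k → ℝ := fun a => ((univ.filter fun i => σ i = a).card : ℝ) / n
    letI R : Matrix (Fin k) (Fin k) ℝ := Matrix.diagonal r
    letI Rhalf : Matrix (Fin k) (Fin k) ℝ := Matrix.diagonal fun a => Real.sqrt (r a)
    ((Abar.mulVec u = ν • u) ↔ (ut ᵥ* (R * C) = ν • ut)) ∧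
      ((ut ᵥ* (R * C) = ν • ut) ↔
        ((Rhalf * C * Rhalf).mulVec (Rhalf.mulVec ut) = ν • Rhalf.mulVec ut)) :=
  inflated_eigen_iff_deflated_general σ hσ C hC ut u hu ν
end

section
/- Under the hypotheses of the previous theorem, assume in addition that V is partitioned into k nonempty clusters V_1,…,V_k and that each u_j is a step-vector, i.e., constant on every cluster V_a. Then, writing x_j^in = Endᵀ x_j, for the k-dimensional node representatives y_i = ((1/d_i) x_1^in(i), …, (1/d_i) x_k^in(i)) ∈ ℝ^k (i = 1,…,n) there exist points z_1,…,z_k ∈ ℝ^k such that Σ_{i=1}^n ‖ y_i − z_{a(i)} ‖² ≤ k ε, where a(i) denotes the index of the cluster containing node i. In particular, the k-means (k-variance) objective of the representatives with respect to the given clusters is at most kε. -/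
open Matrix

/-!
With `w_j = End u_j` and `c_j = ⟨x_j, w_j⟩ / ‖w_j‖²`, the hypothesis on the angle between
`x_j` and `w_j` says that the residual of the projection of `x_j` onto `w_j` is small:
`‖x_j - c_j w_j‖² = 1 - ⟨x_j, w_j⟩² / ‖w_j‖² ≤ ε`. Since `Endᵀ End = D`, the `j`-th coordinate
of `y_i - c_j u_j(i)` is the average of `x_j - c_j w_j` over the darts ending at `i`, and by
Cauchy–Schwarz the squares of these averages sum to at most `‖x_j - c_j w_j‖²`. As `u_j` is a
step-vector, `c_j u_j(i)` depends only on the cluster of `i`, which gives the centers.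
-/

open Finset

theorem sq_sum_div_card_le_sum_sq {ι α : Type*} [Semifield α] [LinearOrder α]
    [IsStrictOrderedRing α] [ExistsAddOfLE α] (s : Finset ι) (f : ι → α) :
    ((∑ i ∈ s, f i) / #s) ^ 2 ≤ ∑ i ∈ s, f i ^ 2 := by
  obtain rfl | hs := s.eq_empty_or_nonempty
  · simp
  exact sum_div_card_sq_le_sum_sq_div_card.trans
    (div_le_self (sum_nonneg fun i _ => sq_nonneg (f i)) (by exact_mod_cast hs.card_pos))

theorem le_sq_div_of_sqrt_le_inv_sqrt_mul {a p q : ℝ} (hq : 0 ≤ q) (h : √a ≤ (√q)⁻¹ * p) :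
    a ≤ p ^ 2 / q :=
  calc a ≤ √a ^ 2 := by rw [Real.sq_sqrt']; exact le_max_left a 0
    _ ≤ ((√q)⁻¹ * p) ^ 2 := pow_le_pow_left₀ (Real.sqrt_nonneg a) h 2
    _ = p ^ 2 / q := by rw [mul_pow, inv_pow, Real.sq_sqrt hq, inv_mul_eq_div]

theorem dotProduct_sub_div_smul_self {ι : Type*} [Fintype ι] (x w : ι → ℝ) :
    (x - (x ⬝ᵥ w / w ⬝ᵥ w) • w) ⬝ᵥ (x - (x ⬝ᵥ w / w ⬝ᵥ w) • w) =
      x ⬝ᵥ x - (x ⬝ᵥ w) ^ 2 / w ⬝ᵥ w := by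
  simp only [sub_dotProduct, dotProduct_sub, smul_dotProduct, dotProduct_smul, smul_eq_mul,
    dotProduct_comm w x]
  rcases eq_or_ne (w ⬝ᵥ w) 0 with hw | hw
  · simp [hw]
  · field_simp
    ring

theorem dotProduct_sub_div_smul_self_le {ι : Type*} [Fintype ι] {x w : ι → ℝ} {a : ℝ}
    (h : √a ≤ x ⬝ᵥ ((√(w ⬝ᵥ w))⁻¹ • w)) :
    (x - (x ⬝ᵥ w / w ⬝ᵥ w) • w) ⬝ᵥ (x - (x ⬝ᵥ w / w ⬝ᵥ w) • w) ≤ x ⬝ᵥ x - a := by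
  rw [dotProduct_smul, smul_eq_mul] at h
  rw [dotProduct_sub_div_smul_self]
  have hw : 0 ≤ w ⬝ᵥ w := by simpa using dotProduct_self_star_nonneg w
  linarith [le_sq_div_of_sqrt_le_inv_sqrt_mul hw h]

namespace SimpleGraph

variable {V : Type*} [Fintype V] [DecidableEq V] (G : SimpleGraph V) [DecidableRel G.Adj]

theorem dart_snd_fiber_card_eq_degree (v : V) : #{d : G.Dart | d.snd = v} = G.degree v := by
  rw [← G.dart_fst_fiber_card_eq_degree v]
  exact card_nbij' Dart.symm Dart.symm (fun d hd => by simpa using hd)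
    (fun d hd => by simpa using hd) (fun d _ => Dart.symm_involutive d)
    (fun d _ => Dart.symm_involutive d)

end SimpleGraph

section endMatrix

variable {V : Type*} [Fintype V] [DecidableEq V] (G : SimpleGraph V)

theorem endMatrix_mulVec_apply (f : V → ℝ) (e : G.Dart) : (endMatrix G *ᵥ f) e = f e.snd := by
  simp [endMatrix, mulVec, dotProduct]

variable [DecidableRel G.Adj]

theorem endMatrix_transpose_mulVec_apply (y : G.Dart → ℝ) (i : V) :
    ((endMatrix G)ᵀ *ᵥ y) i = ∑ e with e.snd = i, y e := by
  simp [endMatrix, mulVec, dotProduct, sum_filter]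

theorem endMatrix_transpose_mulVec_endMatrix_mulVec (f : V → ℝ) :
    (endMatrix G)ᵀ *ᵥ (endMatrix G *ᵥ f) = fun i => G.degree i * f i := by
  ext i
  rw [endMatrix_transpose_mulVec_apply, ← G.dart_snd_fiber_card_eq_degree i, ← nsmul_eq_mul,
    ← sum_const]
  refine sum_congr rfl fun e he => ?_
  rw [endMatrix_mulVec_apply, (mem_filter.mp he).2]

theorem sum_sq_inv_degree_mul_transpose_mulVec_le (y : G.Dart → ℝ) :
    ∑ i, ((G.degree i : ℝ)⁻¹ * ((endMatrix G)ᵀ *ᵥ y) i) ^ 2 ≤ y ⬝ᵥ y :=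
  calc ∑ i, ((G.degree i : ℝ)⁻¹ * ((endMatrix G)ᵀ *ᵥ y) i) ^ 2
      = ∑ i, ((∑ e with e.snd = i, y e) / #{e : G.Dart | e.snd = i}) ^ 2 := by
        simp only [endMatrix_transpose_mulVec_apply, G.dart_snd_fiber_card_eq_degree,
          inv_mul_eq_div]
    _ ≤ ∑ i, ∑ e with e.snd = i, y e ^ 2 :=
        sum_le_sum fun i _ => sq_sum_div_card_le_sum_sq _ y
    _ = y ⬝ᵥ y := by
        rw [sum_fiberwise]
        simp only [dotProduct, sq]

theorem sum_sq_inv_degree_mul_transpose_mulVec_sub_le (hdeg : ∀ i, 0 < G.degree i)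
    (x : G.Dart → ℝ) (f : V → ℝ) :
    ∑ i, ((G.degree i : ℝ)⁻¹ * ((endMatrix G)ᵀ *ᵥ x) i - f i) ^ 2 ≤
      (x - endMatrix G *ᵥ f) ⬝ᵥ (x - endMatrix G *ᵥ f) := by
  have hmean : ∀ i, (G.degree i : ℝ)⁻¹ * ((endMatrix G)ᵀ *ᵥ x) i - f i =
      (G.degree i : ℝ)⁻¹ * ((endMatrix G)ᵀ *ᵥ (x - endMatrix G *ᵥ f)) i := fun i => by
    have hd : (G.degree i : ℝ) ≠ 0 := by exact_mod_cast (hdeg i).ne'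
    rw [mulVec_sub, endMatrix_transpose_mulVec_endMatrix_mulVec, Pi.sub_apply]
    field_simp
  simp only [hmean]
  exact sum_sq_inv_degree_mul_transpose_mulVec_le G _

end endMatrix

theorem kmeans_objective_bound_general {V : Type*} [Fintype V] [DecidableEq V]
    (G : SimpleGraph V) [DecidableRel G.Adj]
    (hdeg : ∀ i : V, 1 ≤ G.degree i)
    (k : ℕ) (ε : ℝ)
    (x : Fin k → G.Dart → ℝ) (hx : ∀ j, x j ⬝ᵥ x j = 1)
    (u : Fin k → V → ℝ)
    (hinner : ∀ j, Real.sqrt (1 - ε) ≤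
      x j ⬝ᵥ ((Real.sqrt ((endMatrix G).mulVec (u j) ⬝ᵥ (endMatrix G).mulVec (u j)))⁻¹ •
        (endMatrix G).mulVec (u j)))
    (τ : V → Fin k)
    (hstep : ∀ j, ∀ i i' : V, τ i = τ i' → u j i = u j i') :
    ∃ z : Fin k → Fin k → ℝ,
      ∑ i : V, ∑ j : Fin k,
        (((G.degree i : ℝ))⁻¹ * (endMatrix G)ᵀ.mulVec (x j) i - z (τ i) j) ^ 2 ≤
      k * ε := by
  set w : Fin k → G.Dart → ℝ := fun j => endMatrix G *ᵥ u j
  set c : Fin k → ℝ := fun j => x j ⬝ᵥ w j / w j ⬝ᵥ w j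
  refine ⟨fun a j => c j * Function.extend τ (u j) 0 a, ?_⟩
  have hcenter : ∀ i j, c j * Function.extend τ (u j) 0 (τ i) = (c j • u j) i := fun i j => by
    rw [Function.FactorsThrough.extend_apply (fun _ _ h => hstep j _ _ h)]
    rfl
  simp only [hcenter]
  rw [sum_comm]
  calc _ ≤ ∑ _j : Fin k, ε := sum_le_sum fun j _ => ?_
    _ = k * ε := by simp
  calc _ ≤ (x j - endMatrix G *ᵥ (c j • u j)) ⬝ᵥ (x j - endMatrix G *ᵥ (c j • u j)) :=
        sum_sq_inv_degree_mul_transpose_mulVec_sub_le G hdeg _ _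
    _ ≤ x j ⬝ᵥ x j - (1 - ε) := by
        rw [mulVec_smul]
        exact dotProduct_sub_div_smul_self_le (hinner j)
    _ = ε := by rw [hx j]; ring

/-- If moreover the nodes are partitioned into `k` nonempty clusters (by a surjective
assignment `τ`) and each `u_j` is a step-vector (constant on clusters), then the
`k`-dimensional node representatives `y_i = ((1/d_i)(Endᵀ x_1)_i, …, (1/d_i)(Endᵀ x_k)_i)`
admit cluster centers `z_1,…,z_k` with `Σ_i ‖y_i − z_{τ(i)}‖² ≤ k ε`; i.e., the
`k`-means (`k`-variance) objective with respect to the clusters is at most `k ε`. -/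
theorem kmeans_objective_bound {V : Type*} [Fintype V] [DecidableEq V]
    (G : SimpleGraph V) [DecidableRel G.Adj]
    (hdeg : ∀ i : V, 1 ≤ G.degree i)
    (k : ℕ) (ε : ℝ) (hε0 : 0 ≤ ε) (hε1 : ε ≤ 1)
    (x : Fin k → G.Dart → ℝ) (hx : ∀ j, x j ⬝ᵥ x j = 1)
    (u : Fin k → V → ℝ) (hu : ∀ j, u j ⬝ᵥ u j = 1)
    (hinner : ∀ j, Real.sqrt (1 - ε) ≤
      x j ⬝ᵥ ((Real.sqrt ((endMatrix G).mulVec (u j) ⬝ᵥ (endMatrix G).mulVec (u j)))⁻¹ •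
        (endMatrix G).mulVec (u j)))
    (τ : V → Fin k) (hτ : Function.Surjective τ)
    (hstep : ∀ j, ∀ i i' : V, τ i = τ i' → u j i = u j i') :
    ∃ z : Fin k → Fin k → ℝ,
      ∑ i : V, ∑ j : Fin k,
        (((G.degree i : ℝ))⁻¹ * (endMatrix G)ᵀ.mulVec (x j) i - z (τ i) j) ^ 2 ≤
      k * ε :=
  kmeans_objective_bound_general G hdeg k ε x hx u hinner τ hstep
end
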